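/- arXiv:1611.05656 — 2 statements merged into one kernel-verified Lean document; each statement's English description precedes it below -/
import Mathlib

section
/- Let G be the graph on n = t(k+1) vertices consisting of a clique on t vertices with a path of length k attached to each clique vertex. For a vertex v on one of the paths at distance i from the clique (0 ≤ i ≤ k), sep(v) = 2((n−1) + (k−i)(n−1−(k−i))). Consequently sep is strictly maximized exactly at the clique vertices (i = 0), provided t ≥ 2 and k ≥ 1. -/
/-- The separation of a vertex `u`: the number of ordered pairs `(v,w)` of
distinct vertices such that every `v`–`w` path in `G` passes through `u`. -/
noncomputable def vertexSep {V : Type*} [Fintype V] (G : SimpleGraph V) (u : V) : ℕ :=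
  Nat.card {p : V × V // p.1 ≠ p.2 ∧ ∀ q : G.Walk p.1 p.2, q.IsPath → u ∈ q.support}

lemma seg_walk {t k : ℕ} (G : SimpleGraph (Fin t × Fin (k+1)))
    (hadj : ∀ p q : Fin t × Fin (k + 1), G.Adj p q ↔
      ((p.2.val = 0 ∧ q.2.val = 0 ∧ p.1 ≠ q.1) ∨
        (p.1 = q.1 ∧ (p.2.val + 1 = q.2.val ∨ q.2.val + 1 = p.2.val))))
    (c' : Fin t) :
    ∀ (j : ℕ) (hj : j < k+1) (j' : ℕ) (hj' : j' ≤ j),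
      ∃ w : G.Walk (c', ⟨j, hj⟩) (c', ⟨j', lt_of_le_of_lt hj' hj⟩),
        ∀ v ∈ w.support, v.1 = c' ∧ j' ≤ v.2.val ∧ v.2.val ≤ j := by
  intro j
  induction j with
  | zero =>
    intro hj j' hj'
    interval_cases j'
    exact ⟨SimpleGraph.Walk.nil, by simp⟩
  | succ j ih =>
    intro hj j' hj'
    rcases Nat.eq_or_lt_of_le hj' with h | h
    · subst h
      exact ⟨SimpleGraph.Walk.nil, by simp⟩
    · have hj'' : j' ≤ j := by omega
      have hjk : j < k + 1 := by omega
      obtain ⟨w, hw⟩ := ih hjk j' hj''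
      have hadj1 : G.Adj (c', ⟨j+1, hj⟩) (c', ⟨j, hjk⟩) := by
        rw [hadj]; right; exact ⟨rfl, Or.inr rfl⟩
      refine ⟨SimpleGraph.Walk.cons hadj1 w, ?_⟩
      intro v hv
      rw [SimpleGraph.Walk.support_cons, List.mem_cons] at hv
      rcases hv with rfl | hv
      · exact ⟨rfl, hj', le_rfl⟩
      · obtain ⟨h1, h2, h3⟩ := hw v hv
        exact ⟨h1, h2, by omega⟩

lemma sep_walk {t k : ℕ} (G : SimpleGraph (Fin t × Fin (k+1)))
    (hadj : ∀ p q : Fin t × Fin (k + 1), G.Adj p q ↔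
      ((p.2.val = 0 ∧ q.2.val = 0 ∧ p.1 ≠ q.1) ∨
        (p.1 = q.1 ∧ (p.2.val + 1 = q.2.val ∨ q.2.val + 1 = p.2.val))))
    (c : Fin t) (i : Fin (k+1)) :
    ∀ {x y : Fin t × Fin (k+1)} (w : G.Walk x y),
      (x.1 = c ∧ i.val < x.2.val) → ¬(y.1 = c ∧ i.val < y.2.val) →
        (c, i) ∈ w.support := by
  intro x y w
  induction w with
  | nil => intro hx hy; exact absurd hx hy
  | @cons a b d h p ih =>
    intro hx hy
    rw [hadj] at h
    rw [SimpleGraph.Walk.support_cons, List.mem_cons]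
    rcases h with ⟨h0, _, _⟩ | ⟨hc, hstep⟩
    · omega
    · by_cases hb : b = (c, i)
      · right; rw [← hb]; exact p.start_mem_support
      · have hbA : b.1 = c ∧ i.val < b.2.val := by
          refine ⟨hc ▸ hx.1, ?_⟩
          rcases hstep with h1 | h1
          · omega
          · rcases Nat.lt_or_ge i.val b.2.val with h2 | h2
            · exact h2
            · exfalso
              have : b.2.val = i.val := by omega
              exact hb (Prod.ext (hc ▸ hx.1) (Fin.ext this))
        right; exact ih hbA hy

lemma awalk {t k : ℕ} (G : SimpleGraph (Fin t × Fin (k+1)))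
    (hadj : ∀ p q : Fin t × Fin (k + 1), G.Adj p q ↔
      ((p.2.val = 0 ∧ q.2.val = 0 ∧ p.1 ≠ q.1) ∨
        (p.1 = q.1 ∧ (p.2.val + 1 = q.2.val ∨ q.2.val + 1 = p.2.val))))
    (c : Fin t) (i x2 y2 : Fin (k+1))
    (hx2 : i.val < x2.val) (hy2 : i.val < y2.val) :
    ∃ w : G.Walk (c, x2) (c, y2), ∀ v ∈ w.support, v ≠ (c, i) := by
  rcases le_total x2.val y2.val with h | h
  · obtain ⟨w, hw⟩ := seg_walk G hadj c y2.val y2.isLt x2.val h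
    refine ⟨w.reverse, ?_⟩
    intro v hv
    rw [SimpleGraph.Walk.support_reverse, List.mem_reverse] at hv
    obtain ⟨_, h2, _⟩ := hw v hv
    intro hvu
    rw [hvu] at h2
    simp only at h2
    omega
  · obtain ⟨w, hw⟩ := seg_walk G hadj c x2.val x2.isLt y2.val h
    refine ⟨w, ?_⟩
    intro v hv
    obtain ⟨_, h2, _⟩ := hw v hv
    intro hvu
    rw [hvu] at h2
    simp only at h2
    omega

lemma bwalk {t k : ℕ} (G : SimpleGraph (Fin t × Fin (k+1)))
    (hadj : ∀ p q : Fin t × Fin (k + 1), G.Adj p q ↔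
      ((p.2.val = 0 ∧ q.2.val = 0 ∧ p.1 ≠ q.1) ∨
        (p.1 = q.1 ∧ (p.2.val + 1 = q.2.val ∨ q.2.val + 1 = p.2.val))))
    (c : Fin t) (i : Fin (k+1)) (x1 y1 : Fin t) (x2 y2 : Fin (k+1))
    (hxA : ¬(x1 = c ∧ i.val < x2.val)) (hxu : (x1, x2) ≠ (c, i))
    (hyA : ¬(y1 = c ∧ i.val < y2.val)) (hyu : (y1, y2) ≠ (c, i)) :
    ∃ w : G.Walk (x1, x2) (y1, y2), ∀ v ∈ w.support, v ≠ (c, i) := by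
  have key : ∀ (c1 : Fin t) (z2 : Fin (k+1)),
      ¬(c1 = c ∧ i.val < z2.val) → (c1, z2) ≠ (c, i) →
      ∀ v : Fin t × Fin (k+1), v.1 = c1 → v.2.val ≤ z2.val → v ≠ (c, i) := by
    intro c1 z2 hA hu v hv1 hv2 hvu
    subst hvu
    have hc1 : c1 = c := hv1.symm
    subst hc1
    have hle : z2.val ≤ i.val := not_lt.mp (fun h => hA ⟨rfl, h⟩)
    exact hu (Prod.ext rfl (Fin.ext (le_antisymm hle hv2)))
  obtain ⟨w1, hw1⟩ := seg_walk G hadj x1 x2.val x2.isLt 0 (Nat.zero_le _)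
  obtain ⟨w3, hw3⟩ := seg_walk G hadj y1 y2.val y2.isLt 0 (Nat.zero_le _)
  by_cases hc : x1 = y1
  · subst hc
    refine ⟨w1.append w3.reverse, ?_⟩
    intro v hv
    rw [SimpleGraph.Walk.mem_support_append_iff] at hv
    rcases hv with hv | hv
    · obtain ⟨h1, _, h3⟩ := hw1 v hv
      exact key x1 x2 hxA hxu v h1 h3
    · rw [SimpleGraph.Walk.support_reverse, List.mem_reverse] at hv
      obtain ⟨h1, _, h3⟩ := hw3 v hv
      exact key x1 y2 hyA hyu v h1 h3
  · have hadj2 : G.Adj (x1, (⟨0, lt_of_le_of_lt (Nat.zero_le _) x2.isLt⟩ : Fin (k+1)))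
        (y1, (⟨0, lt_of_le_of_lt (Nat.zero_le _) y2.isLt⟩ : Fin (k+1))) := by
      rw [hadj]; left; exact ⟨rfl, rfl, hc⟩
    refine ⟨w1.append ((SimpleGraph.Walk.cons hadj2 w3.reverse)), ?_⟩
    intro v hv
    rw [SimpleGraph.Walk.mem_support_append_iff] at hv
    rcases hv with hv | hv
    · obtain ⟨h1, _, h3⟩ := hw1 v hv
      exact key x1 x2 hxA hxu v h1 h3
    · rw [SimpleGraph.Walk.support_cons, List.mem_cons] at hv
      rcases hv with rfl | hv
      · exact key x1 x2 hxA hxu _ rfl (Nat.zero_le _)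
      · rw [SimpleGraph.Walk.support_reverse, List.mem_reverse] at hv
        obtain ⟨h1, _, h3⟩ := hw3 v hv
        exact key y1 y2 hyA hyu v h1 h3

lemma arith_main (a m : ℕ) :
    (a+m+1)*(a+m+1) - (a+m+1) - (a*a - a + (m*m - m)) = 2*((a+m) + a*m) := by
  have h1 : a ≤ a*a := by nlinarith
  have h2 : m ≤ m*m := by nlinarith
  have h4 : (a+m+1) ≤ (a+m+1)*(a+m+1) := by nlinarith
  have h3 : a*a - a + (m*m - m) ≤ (a+m+1)*(a+m+1) - (a+m+1) := by
    zify [h1, h2, h4]; nlinarith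
  zify [h1, h2, h3, h4]
  ring

example (n k i : ℕ) (hik : 1 ≤ i) (hik2 : i ≤ k) (hn : 2*k+2 ≤ n) :
    (k - i) * (n - 1 - (k - i)) < k * (n - 1 - k) := by
  have ha : k - i ≤ n - 1 := by omega
  have hb : k ≤ n - 1 := by omega
  have hc : 1 ≤ n := by omega
  zify [ha, hb, hc, hik2]
  have hp : (0:ℤ) < (i:ℤ) := by exact_mod_cast hik
  have hq : (0:ℤ) < (n:ℤ) - 1 - 2*k + i := by
    have : (2*k+2 : ℤ) ≤ (n:ℤ) := by exact_mod_cast hn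
    omega
  nlinarith [mul_pos hp hq]

/-- Let `G` be the graph on `n = t(k+1)` vertices (`t ≥ 2`, `k ≥ 1`) formed by
a clique on `t` vertices with a path of length `k` attached to each clique
vertex: vertex `(c, i)` is the vertex at distance `i` from the clique on the
path of clique vertex `c`. Then for every such vertex,
`sep((c,i)) = 2((n−1) + (k−i)(n−1−(k−i)))`, and `sep` is strictly maximized
exactly at the clique vertices (`i = 0`). -/
theorem stmt_10 (t k : ℕ) (ht : 2 ≤ t) (hk : 1 ≤ k) (n : ℕ)
    (hn : n = t * (k + 1)) (G : SimpleGraph (Fin t × Fin (k + 1)))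
    (hadj : ∀ p q : Fin t × Fin (k + 1), G.Adj p q ↔
      ((p.2.val = 0 ∧ q.2.val = 0 ∧ p.1 ≠ q.1) ∨
        (p.1 = q.1 ∧ (p.2.val + 1 = q.2.val ∨ q.2.val + 1 = p.2.val)))) :
    (∀ (c : Fin t) (i : Fin (k + 1)),
        vertexSep G (c, i) = 2 * ((n - 1) + (k - i.val) * (n - 1 - (k - i.val)))) ∧
      (∀ (c c' : Fin t) (i : Fin (k + 1)), i.val ≠ 0 →
        vertexSep G (c, i) < vertexSep G (c', (0 : Fin (k + 1)))) := by
  classical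
  have hn2 : 2*k+2 ≤ n := by
    have : 2*(k+1) ≤ t*(k+1) := Nat.mul_le_mul_right _ ht
    omega
  have main : ∀ (c : Fin t) (i : Fin (k + 1)),
      vertexSep G (c, i) = 2 * ((n - 1) + (k - i.val) * (n - 1 - (k - i.val))) := by
    intro c i
    set u : Fin t × Fin (k+1) := (c, i) with hu
    set Af : Finset (Fin t × Fin (k+1)) := Finset.univ.filter (fun v => v.1 = c ∧ i.val < v.2.val) with hAf
    set Bf : Finset (Fin t × Fin (k+1)) :=
      Finset.univ.filter (fun v => ¬(v.1 = c ∧ i.val < v.2.val) ∧ v ≠ u) with hBf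
    set S : Finset ((Fin t × Fin (k+1)) × (Fin t × Fin (k+1))) := Finset.univ.offDiag \ (Af.offDiag ∪ Bf.offDiag) with hS
    have hchar : ∀ p : (Fin t × Fin (k+1)) × (Fin t × Fin (k+1)),
        (p.1 ≠ p.2 ∧ ∀ q : G.Walk p.1 p.2, q.IsPath → u ∈ q.support) ↔ p ∈ S := by
      rintro ⟨x, y⟩
      constructor
      · rintro ⟨hne, hpaths⟩
        rw [hS, Finset.mem_sdiff, Finset.mem_union]
        refine ⟨Finset.mem_offDiag.mpr ⟨Finset.mem_univ _, Finset.mem_univ _, hne⟩, ?_⟩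
        rintro (hA | hB)
        · rw [Finset.mem_offDiag] at hA
          obtain ⟨hx, hy, _⟩ := hA
          rw [hAf, Finset.mem_filter] at hx hy
          obtain ⟨x1, x2⟩ := x
          obtain ⟨y1, y2⟩ := y
          obtain ⟨hx1, hx2⟩ := hx.2
          obtain ⟨hy1, hy2⟩ := hy.2
          simp only at hx1 hy1 hx2 hy2
          obtain ⟨w, hw⟩ := awalk G hadj c i x2 y2 hx2 hy2
          have hp := hpaths ((w.copy (by rw [hx1]) (by rw [hy1])).bypass)
            (SimpleGraph.Walk.bypass_isPath _)
          have hsup := SimpleGraph.Walk.support_bypass_subset _ hp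
          rw [SimpleGraph.Walk.support_copy] at hsup
          exact hw u hsup rfl
        · rw [Finset.mem_offDiag] at hB
          obtain ⟨hx, hy, _⟩ := hB
          rw [hBf, Finset.mem_filter] at hx hy
          obtain ⟨x1, x2⟩ := x
          obtain ⟨y1, y2⟩ := y
          obtain ⟨hxA, hxu⟩ := hx.2
          obtain ⟨hyA, hyu⟩ := hy.2
          simp only at hxA hyA
          obtain ⟨w, hw⟩ := bwalk G hadj c i x1 y1 x2 y2 hxA hxu hyA hyu
          have hp := hpaths w.bypass w.bypass_isPath
          exact hw u (w.support_bypass_subset hp) rfl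
      · intro hp
        rw [hS, Finset.mem_sdiff, Finset.mem_union] at hp
        obtain ⟨hoff, hnotAB⟩ := hp
        push_neg at hnotAB
        obtain ⟨hnA, hnB⟩ := hnotAB
        rw [Finset.mem_offDiag] at hoff
        obtain ⟨-, -, hne⟩ := hoff
        refine ⟨hne, ?_⟩
        intro q _
        by_cases hxu : x = u
        · rw [← hxu]; exact q.start_mem_support
        · by_cases hyu : y = u
          · rw [← hyu]; exact q.end_mem_support
          · by_cases hxA : x.1 = c ∧ i.val < x.2.val
            · by_cases hyA : y.1 = c ∧ i.val < y.2.val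
              · exfalso
                apply hnA
                rw [Finset.mem_offDiag]
                exact ⟨Finset.mem_filter.mpr ⟨Finset.mem_univ _, hxA⟩,
                  Finset.mem_filter.mpr ⟨Finset.mem_univ _, hyA⟩, hne⟩
              · exact sep_walk G hadj c i q hxA hyA
            · by_cases hyA : y.1 = c ∧ i.val < y.2.val
              · have h := sep_walk G hadj c i q.reverse hyA hxA
                rwa [SimpleGraph.Walk.support_reverse, List.mem_reverse] at h
              · exfalso
                apply hnB
                rw [Finset.mem_offDiag]
                exact ⟨Finset.mem_filter.mpr ⟨Finset.mem_univ _, hxA, hxu⟩,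
                  Finset.mem_filter.mpr ⟨Finset.mem_univ _, hyA, hyu⟩, hne⟩
    have hcard : vertexSep G u = S.card := by
      rw [vertexSep]
      rw [Nat.card_congr (Equiv.subtypeEquivRight hchar)]
      rw [Nat.card_eq_fintype_card]
      exact Fintype.card_coe S
    -- cardinalities
    have huniv : (Finset.univ : Finset (Fin t × Fin (k+1))).card = n := by
      simp [hn]
    have hAcard : Af.card = k - i.val := by
      have himg : Af = (Finset.Ioi i).image (fun m => (c, m)) := by
        ext ⟨v1, v2⟩
        simp only [hAf, Finset.mem_filter, Finset.mem_univ, true_and, Finset.mem_image,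
          Finset.mem_Ioi]
        constructor
        · rintro ⟨rfl, h2⟩
          exact ⟨v2, by exact h2, rfl⟩
        · rintro ⟨m, hm, heq⟩
          obtain ⟨h1, h2⟩ := Prod.mk.injEq .. ▸ heq
          exact ⟨h1.symm ▸ rfl, by subst h2; exact hm⟩
      rw [himg, Finset.card_image_of_injective _ (fun a b h => (Prod.mk.injEq _ _ _ _ ▸ h).2),
        Fin.card_Ioi]
      omega
    have huA : u ∉ Af := by
      simp [hAf, hu]
    have hBcard : Bf.card = n - 1 - (k - i.val) := by
      have hB2 : Bf = Finset.univ \ insert u Af := by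
        ext v
        simp only [hBf, hAf, Finset.mem_filter, Finset.mem_univ, true_and, Finset.mem_sdiff,
          Finset.mem_insert, not_or]
        tauto
      rw [hB2, Finset.card_sdiff_of_subset (Finset.subset_univ _), Finset.card_insert_of_notMem huA,
        hAcard, huniv]
      have : k - i.val ≤ k := Nat.sub_le _ _
      omega
    have hdisj : Disjoint Af.offDiag Bf.offDiag := by
      rw [Finset.disjoint_left]
      intro p hp1 hp2
      rw [Finset.mem_offDiag] at hp1 hp2
      have h1 := Finset.mem_filter.mp hp1.1
      have h2 := Finset.mem_filter.mp hp2.1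
      exact h2.2.1 h1.2
    have hsub : Af.offDiag ∪ Bf.offDiag ⊆ Finset.univ.offDiag := by
      intro p hp
      rw [Finset.mem_union] at hp
      rw [Finset.mem_offDiag]
      rcases hp with hp | hp <;> rw [Finset.mem_offDiag] at hp <;>
        exact ⟨Finset.mem_univ _, Finset.mem_univ _, hp.2.2⟩
    have hScard : S.card = (n*n - n) - ((k - i.val)*(k - i.val) - (k - i.val)
        + ((n - 1 - (k - i.val))*(n - 1 - (k - i.val)) - (n - 1 - (k - i.val)))) := by
      rw [hS, Finset.card_sdiff_of_subset hsub, Finset.card_union_of_disjoint hdisj,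
        Finset.offDiag_card, Finset.offDiag_card, Finset.offDiag_card,
        huniv, hAcard, hBcard]
    rw [hcard, hScard]
    -- final arithmetic
    have hik : i.val ≤ k := by omega
    set a := k - i.val with ha
    have hm : n - 1 - a = n - 1 - a := rfl
    have hax : a ≤ k := Nat.sub_le _ _
    have hnab : n = a + (n - 1 - a) + 1 := by omega
    have hrw : n - 1 = a + (n - 1 - a) := by omega
    calc (n*n - n) - (a*a - a + ((n - 1 - a)*(n - 1 - a) - (n - 1 - a)))
        = ((a + (n-1-a) + 1)*(a + (n-1-a) + 1) - (a + (n-1-a) + 1))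
          - (a*a - a + ((n-1-a)*(n-1-a) - (n-1-a))) := by rw [← hnab]
      _ = 2*((a + (n-1-a)) + a*(n-1-a)) := arith_main a (n-1-a)
      _ = 2*((n-1) + a*(n-1-a)) := by rw [← hrw]
  refine ⟨main, ?_⟩
  intro c c' i hi
  rw [main c i, main c' 0]
  simp only [Fin.val_zero, Nat.sub_zero]
  have hik : i.val ≤ k := by omega
  have hi1 : 1 ≤ i.val := by omega
  have hlt : (k - i.val) * (n - 1 - (k - i.val)) < k * (n - 1 - k) := by
    have ha : k - i.val ≤ n - 1 := by omega
    have hb : k ≤ n - 1 := by omega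
    have hc : 1 ≤ n := by omega
    zify [ha, hb, hc, hik]
    have hp : (0:ℤ) < (i.val:ℤ) := by exact_mod_cast hi1
    have hq : (0:ℤ) < (n:ℤ) - 1 - 2*k + i.val := by
      have : (2*k+2 : ℤ) ≤ (n:ℤ) := by exact_mod_cast hn2
      omega
    nlinarith [mul_pos hp hq]
  omega
end

section
/- In a swap equilibrium for the uniform edge destroyer, the graph is either bridgeless or a tree; in fact if it has a bridge it is a star, so its social cost is at most 2(n−1). -/
attribute [local instance] Classical.propDecidable

/-- The relevance of the edge `e` for the player `v`: the number of vertices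
cut off from `v` when `e` is deleted. -/
noncomputable def relE {V : Type*} [Fintype V] (G : SimpleGraph V) (e : Sym2 V)
    (v : V) : ℕ :=
  Nat.card {w : V // ¬ (G.deleteEdges {e}).Reachable v w}

/-- The cost of player `v` under the uniform edge destroyer: the expected
number of vertices cut off from `v` when one edge of `G`, chosen uniformly at
random, is deleted. -/
noncomputable def costE {V : Type*} [Fintype V] (G : SimpleGraph V) (v : V) : ℝ :=
  (∑ e ∈ G.edgeFinset, (relE G e v : ℝ)) / G.edgeFinset.card

/-- The graph obtained from `G` when player `a` swaps her edge `ab` for the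
new edge `ac`. -/
def swapEdge {V : Type*} (G : SimpleGraph V) (a b c : V) : SimpleGraph V :=
  SimpleGraph.fromEdgeSet ((G.edgeSet \ {s(a, b)}) ∪ {s(a, c)})

/-- `G` is a swap equilibrium for the uniform edge destroyer: no player can
strictly decrease her cost by swapping an incident edge for another incident
edge, or by deleting an incident edge (a disconnecting move yields infinite
cost and is never an improvement). -/
def IsSwapEqEdgeUniform {V : Type*} [Fintype V] (G : SimpleGraph V) : Prop :=
  G.Connected ∧
    (∀ a b c : V, G.Adj a b → ¬ G.Adj a c → a ≠ c →
      (swapEdge G a b c).Connected → costE G a ≤ costE (swapEdge G a b c) a) ∧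
    (∀ a b : V, G.Adj a b → (G.deleteEdges {s(a, b)}).Connected →
      costE G a ≤ costE (G.deleteEdges {s(a, b)}) a)

/-!
Suppose `G` has a bridge `qp`. If the side of `q` has more than one vertex, `q` has a neighbour
`u ≠ p` there, and `uq` is again a bridge: otherwise `uq` lies on a cycle, and `u` could swap it
for `up`, making `qp` less relevant to her without making any other edge more relevant. As the
side of `u` is strictly smaller, a minimal bridge side is a single leaf `ℓ`, attached to some `p`.

Let `T(x)` be the total relevance of all edges for `x`. A leaf attached to `p` that swaps over to
`c` pays `T(c)` minus the number of edges separating `c` from `p`, instead of `T(p)`. So in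
equilibrium no edge other than the leaf edges separates the supports `p`, `p'` of two leaves, as
then `T(p) < T(p')` and `T(p') < T(p)`. But if a neighbour `u` of `p` were not a leaf, `up` would
be a bridge (by the first argument) whose far side contains a leaf with support `p' ≠ p`. Hence every neighbour of `p` is a
leaf, `G` is a star, and each of its edges has total relevance `2(n - 1)`; in a bridgeless graph
no edge is relevant at all.
-/

open Finset

namespace SimpleGraph

variable {V : Type*}

section Reachability

variable {H K : SimpleGraph V} {a b x y ℓ p : V}

theorem Reachable.of_forall_adj (h : ∀ u v, H.Adj u v → K.Reachable u v)
    (hxy : H.Reachable x y) : K.Reachable x y := by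
  rw [reachable_iff_reflTransGen] at hxy
  induction hxy with
  | refl => rfl
  | tail _ huv ih => exact ih.trans (h _ _ huv)

/-- Deleting `s(a, b)`, a walk from `x` survives up to its last visit of `a` or `b`. -/
theorem Reachable.deleteEdges_or (h : H.Reachable x y) :
    (H.deleteEdges {s(a, b)}).Reachable x y ∨ (H.deleteEdges {s(a, b)}).Reachable x a ∨
      (H.deleteEdges {s(a, b)}).Reachable x b := by
  rw [reachable_iff_reflTransGen] at h
  induction h with
  | refl => exact .inl .rfl
  | @tail u v _ huv ih =>
    refine ih.elim (fun hu => ?_) .inr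
    by_cases he : s(u, v) = s(a, b)
    · rcases Sym2.eq_iff.1 he with ⟨rfl, -⟩ | ⟨rfl, -⟩
      exacts [.inr (.inl hu), .inr (.inr hu)]
    · exact .inl (hu.trans (deleteEdges_adj.2 ⟨huv, he⟩).reachable)

theorem Reachable.mono_of_deleteEdges_le (h : H.Reachable x y)
    (hle : H.deleteEdges {s(a, b)} ≤ K) (hab : K.Reachable a b) : K.Reachable x y :=
  h.of_forall_adj fun u v huv => by
    by_cases he : s(u, v) = s(a, b)
    · rcases Sym2.eq_iff.1 he with ⟨rfl, rfl⟩ | ⟨rfl, rfl⟩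
      exacts [hab, hab.symm]
    · exact (hle (deleteEdges_adj.2 ⟨huv, he⟩)).reachable

theorem Reachable.deleteEdges_of_subsingleton_neighborSet
    (hℓ : (H.neighborSet ℓ).Subsingleton) (hxℓ : x ≠ ℓ) (hyℓ : y ≠ ℓ) (h : H.Reachable x y) :
    (H.deleteEdges {s(ℓ, p)}).Reachable x y := by
  obtain ⟨q, hq⟩ := h.exists_isPath
  refine ⟨q.toDeleteEdges _ fun e he he' => ?_⟩
  rw [Set.mem_singleton_iff] at he'
  subst he'
  exact hq.isTrail.not_mem_support_of_subsingleton_neighborSet hxℓ.symm hyℓ.symm hℓ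
    (q.fst_mem_support_of_mem_edges he)

theorem adj_of_neighborSet_eq (hℓ : H.neighborSet ℓ = {p}) : H.Adj ℓ p := by
  rw [← mem_neighborSet, hℓ]
  rfl

theorem eq_of_adj_of_neighborSet_eq (hℓ : H.neighborSet ℓ = {p}) (h : H.Adj ℓ y) : y = p := by
  rwa [← mem_neighborSet, hℓ, Set.mem_singleton_iff] at h

theorem eq_of_reachable_deleteEdges_of_neighborSet_eq (hℓ : H.neighborSet ℓ = {p})
    (h : (H.deleteEdges {s(ℓ, p)}).Reachable ℓ y) : y = ℓ := by
  rcases Relation.ReflTransGen.cases_head ((reachable_iff_reflTransGen ℓ y).1 h) with h | ⟨z, hz, -⟩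
  · exact h.symm
  · obtain ⟨hℓz, hz⟩ := deleteEdges_adj.1 hz
    exact absurd (by rw [eq_of_adj_of_neighborSet_eq hℓ hℓz]; rfl) hz

theorem Adj.deleteEdges {e : Sym2 V} (h : H.Adj x y) (he : s(x, y) ≠ e) :
    (H.deleteEdges {e}).Adj x y :=
  deleteEdges_adj.2 ⟨h, he⟩

end Reachability

section Star

variable {G : SimpleGraph V} {p v : V}

theorem Connected.adj_of_forall_neighborSet_eq (hG : G.Connected)
    (h : ∀ u, G.Adj p u → G.neighborSet u = {p}) (hv : v ≠ p) : G.Adj p v := by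
  have key : ∀ w, G.Reachable p w → w = p ∨ G.Adj p w := by
    intro w hw
    rw [reachable_iff_reflTransGen] at hw
    induction hw with
    | refl => exact .inl rfl
    | tail _ hxy ih =>
      rcases ih with rfl | hx
      exacts [.inr hxy, .inl (eq_of_adj_of_neighborSet_eq (h _ hx) hxy)]
  exact (key v (hG.preconnected p v)).resolve_left hv

theorem Connected.mem_of_forall_neighborSet_eq (hG : G.Connected)
    (h : ∀ u, G.Adj p u → G.neighborSet u = {p}) {e : Sym2 V} (he : e ∈ G.edgeSet) : p ∈ e := by
  induction e using Sym2.ind with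
  | _ x y =>
    by_cases hx : x = p
    · exact hx ▸ Sym2.mem_mk_left x y
    · exact eq_of_adj_of_neighborSet_eq (h x (hG.adj_of_forall_neighborSet_eq h hx)) he ▸
        Sym2.mem_mk_right x y

end Star

end SimpleGraph

open SimpleGraph

section Relevance

variable {V : Type*} [Fintype V] {G G' : SimpleGraph V} {e e' : Sym2 V} {v v' ℓ p : V}

theorem relE_eq_ncard : relE G e v = {w | ¬ (G.deleteEdges {e}).Reachable v w}.ncard := by
  rw [relE, ← Nat.card_coe_set_eq]
  rfl

theorem relE_le_relE
    (h : ∀ w, (G.deleteEdges {e}).Reachable v w → (G'.deleteEdges {e'}).Reachable v' w) :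
    relE G' e' v' ≤ relE G e v := by
  rw [relE_eq_ncard, relE_eq_ncard]
  exact Set.ncard_le_ncard fun w hw hr => hw (h w hr)

theorem relE_lt_relE
    (h : ∀ w, (G.deleteEdges {e}).Reachable v w → (G'.deleteEdges {e'}).Reachable v' w)
    {w : V} (hw' : (G'.deleteEdges {e'}).Reachable v' w)
    (hw : ¬ (G.deleteEdges {e}).Reachable v w) :
    relE G' e' v' < relE G e v := by
  have hsub : {u | ¬ (G'.deleteEdges {e'}).Reachable v' u} ⊆
      {u | ¬ (G.deleteEdges {e}).Reachable v u} := fun u hu hr => hu (h u hr)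
  rw [relE_eq_ncard, relE_eq_ncard]
  exact Set.ncard_lt_ncard ((Set.ssubset_iff_of_subset hsub).2 ⟨w, hw, not_not.2 hw'⟩)

theorem relE_eq_of_reachable (h : (G.deleteEdges {e}).Reachable v v') : relE G e v = relE G e v' :=
  (relE_le_relE fun _ hw => h.trans hw).antisymm (relE_le_relE fun _ hw => h.symm.trans hw)

theorem relE_eq_zero_of_not_isBridge (hG : G.Connected) (he : ¬ G.IsBridge e) :
    relE G e v = 0 := by
  induction e using Sym2.ind with
  | _ x y =>
    have hconn := hG.connected_delete_edge_of_not_isBridge he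
    rw [relE_eq_ncard, Set.ncard_eq_zero]
    exact Set.eq_empty_of_forall_notMem fun w hw => hw (hconn.preconnected v w)

theorem relE_eq_one_of_neighborSet_eq (hG : G.Connected) (hℓ : G.neighborSet ℓ = {p}) (hv : v ≠ ℓ) :
    relE G s(ℓ, p) v = 1 := by
  have hsub : (G.neighborSet ℓ).Subsingleton := hℓ ▸ Set.subsingleton_singleton
  rw [relE_eq_ncard, Set.ncard_eq_one]
  refine ⟨ℓ, Set.ext fun w => ⟨fun hw => ?_, ?_⟩⟩
  · by_contra hwℓ
    exact hw ((hG.preconnected v w).deleteEdges_of_subsingleton_neighborSet hsub hv hwℓ)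
  · rintro rfl h
    exact hv (eq_of_reachable_deleteEdges_of_neighborSet_eq hℓ h.symm)

theorem relE_self_of_neighborSet_eq (hℓ : G.neighborSet ℓ = {p}) :
    relE G s(ℓ, p) ℓ = Fintype.card V - 1 := by
  rw [relE_eq_ncard, ← Nat.card_eq_fintype_card, ← Set.ncard_univ,
    ← Set.ncard_sdiff_singleton_of_mem (Set.mem_univ ℓ)]
  congr 1
  ext w
  simp only [Set.mem_ofPred_eq, Set.mem_sdiff, Set.mem_univ, Set.mem_singleton_iff, true_and]
  exact ⟨fun h hw => h (hw ▸ .rfl),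
    fun hw h => hw (eq_of_reachable_deleteEdges_of_neighborSet_eq hℓ h)⟩

theorem sum_relE_of_neighborSet_eq (hG : G.Connected) (hℓ : G.neighborSet ℓ = {p}) :
    ∑ v, relE G s(ℓ, p) v = 2 * (Fintype.card V - 1) := by
  rw [← add_sum_erase _ _ (mem_univ ℓ), relE_self_of_neighborSet_eq hℓ,
    sum_congr rfl fun v hv => relE_eq_one_of_neighborSet_eq hG hℓ (ne_of_mem_erase hv),
    sum_const, card_erase_of_mem (mem_univ ℓ), card_univ, smul_eq_mul, mul_one, two_mul]

theorem sum_costE_le {m : ℝ} (hm : 0 ≤ m) (h : ∀ e ∈ G.edgeFinset, ∑ v, (relE G e v : ℝ) ≤ m) :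
    ∑ v, costE G v ≤ m := by
  simp_rw [costE, ← sum_div]
  rw [sum_comm]
  refine div_le_of_le_mul₀ (Nat.cast_nonneg _) hm ?_
  simpa [mul_comm] using sum_le_sum h

end Relevance

section Swap

variable {V : Type*} {G : SimpleGraph V} {a b c : V}

theorem deleteEdges_le_swapEdge : G.deleteEdges {s(a, b)} ≤ swapEdge G a b c := by
  intro x y h
  rw [deleteEdges_adj] at h
  exact (fromEdgeSet_adj _).2 ⟨.inl ⟨h.1, h.2⟩, h.1.ne⟩

theorem deleteEdges_deleteEdges_le_swapEdge (s : Set (Sym2 V)) :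
    (G.deleteEdges s).deleteEdges {s(a, b)} ≤ (swapEdge G a b c).deleteEdges s := by
  rw [deleteEdges_deleteEdges, Set.union_comm, ← deleteEdges_deleteEdges]
  exact deleteEdges_mono deleteEdges_le_swapEdge

theorem swapEdge_adj_of_ne (h : a ≠ c) : (swapEdge G a b c).Adj a c :=
  (fromEdgeSet_adj _).2 ⟨.inr rfl, h⟩

theorem swapEdge_deleteEdges (h : ¬ G.Adj a c) :
    (swapEdge G a b c).deleteEdges {s(a, c)} = G.deleteEdges {s(a, b)} := by
  ext x y
  simp only [swapEdge, deleteEdges_adj, fromEdgeSet_adj, Set.mem_union, Set.mem_sdiff,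
    Set.mem_singleton_iff, mem_edgeSet]
  constructor
  · rintro ⟨⟨⟨hxy, hab⟩ | hac, -⟩, hac'⟩
    exacts [⟨hxy, hab⟩, absurd hac hac']
  · rintro ⟨hxy, hab⟩
    refine ⟨⟨.inl ⟨hxy, hab⟩, hxy.ne⟩, fun hac => h ?_⟩
    rwa [← mem_edgeSet, ← hac]

theorem swapEdge_edgeFinset [Fintype V] (h : a ≠ c) :
    (swapEdge G a b c).edgeFinset = insert s(a, c) (G.edgeFinset.erase s(a, b)) := by
  ext e
  simp only [mem_edgeFinset, Finset.mem_insert, Finset.mem_erase]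
  simp only [swapEdge, edgeSet_fromEdgeSet, Set.mem_sdiff, Set.mem_union, Set.mem_singleton_iff]
  constructor
  · rintro ⟨⟨he, hab⟩ | hac, -⟩
    exacts [.inr ⟨hab, he⟩, .inl hac]
  · rintro (rfl | ⟨hab, he⟩)
    exacts [⟨.inr rfl, by simpa using h⟩, ⟨.inl ⟨he, hab⟩, G.not_isDiag_of_mem_edgeSet he⟩]

theorem reachable_swapEdge_deleteEdges_of_neighborSet_eq {ℓ p w : V} {f : Sym2 V}
    (hℓ : G.neighborSet ℓ = {p}) (hcℓ : c ≠ ℓ) (hcp : c ≠ p) (hf : f ∈ G.edgeSet)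
    (hw : (G.deleteEdges {f}).Reachable c w) :
    ((swapEdge G ℓ p c).deleteEdges {f}).Reachable ℓ w := by
  by_cases hwℓ : w = ℓ
  · exact hwℓ ▸ .rfl
  have hℓc : ((swapEdge G ℓ p c).deleteEdges {f}).Adj ℓ c :=
    (swapEdge_adj_of_ne hcℓ.symm).deleteEdges <| by
      rintro rfl
      exact hcp (eq_of_adj_of_neighborSet_eq hℓ hf)
  have hsub : ((G.deleteEdges {f}).neighborSet ℓ).Subsingleton :=
    (hℓ ▸ Set.subsingleton_singleton).anti fun z hz => (deleteEdges_adj.1 hz).1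
  exact hℓc.reachable.trans ((hw.deleteEdges_of_subsingleton_neighborSet hsub hcℓ hwℓ).mono
    (deleteEdges_deleteEdges_le_swapEdge _))

end Swap

/-- `#G.edgeFinset` times `costE G v`; a swap keeps the number of edges, so it compares costs
exactly like these sums. -/
noncomputable def totalRelE {V : Type*} [Fintype V] (G : SimpleGraph V) (v : V) : ℕ :=
  ∑ e ∈ G.edgeFinset, relE G e v

namespace IsSwapEqEdgeUniform

variable {V : Type*} [Fintype V] {G : SimpleGraph V} {a b c p q u : V}

theorem totalRelE_le (hse : IsSwapEqEdgeUniform G) (hab : G.Adj a b)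
    (hac : ¬ G.Adj a c) (hne : a ≠ c) (hreach : (swapEdge G a b c).Reachable a b) :
    totalRelE G a ≤ relE (swapEdge G a b c) s(a, c) a +
      ∑ e ∈ G.edgeFinset.erase s(a, b), relE (swapEdge G a b c) e a := by
  have : Nonempty V := hse.1.nonempty
  have hconn : (swapEdge G a b c).Connected :=
    ⟨fun x y => (hse.1.preconnected x y).mono_of_deleteEdges_le deleteEdges_le_swapEdge hreach⟩
  have hE : s(a, b) ∈ G.edgeFinset := mem_edgeFinset.2 hab
  have hnot : s(a, c) ∉ G.edgeFinset.erase s(a, b) :=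
    fun h => hac (mem_edgeFinset.1 (mem_of_mem_erase h))
  have hcard : #(swapEdge G a b c).edgeFinset = #G.edgeFinset := by
    rw [swapEdge_edgeFinset hne, card_insert_of_notMem hnot, card_erase_add_one hE]
  have hcost := hse.2.1 a b c hab hac hne hconn
  rw [costE, costE, hcard, div_le_div_iff_of_pos_right (by exact_mod_cast card_pos.2 ⟨_, hE⟩),
    swapEdge_edgeFinset hne, sum_insert hnot] at hcost
  exact_mod_cast hcost

/-- After `a` trades `ab` for `ac`, the detour `a c b` keeps every edge other than `bc` at most
as relevant to `a` as before, so in equilibrium `bc` cannot have become less relevant. -/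
theorem relE_le_relE_swapEdge (hse : IsSwapEqEdgeUniform G)
    (hab : G.Adj a b) (hbc : G.Adj b c) (hac : ¬ G.Adj a c) (hne : a ≠ c) :
    relE G s(b, c) a ≤ relE (swapEdge G a b c) s(b, c) a := by
  have hG'ac : (swapEdge G a b c).Adj a c := swapEdge_adj_of_ne hne
  have hcb : s(c, b) ≠ s(a, b) := by rw [Ne, Sym2.eq_iff]; grind [hab.ne]
  have hG'cb : (swapEdge G a b c).Adj c b := deleteEdges_le_swapEdge (hbc.symm.deleteEdges hcb)
  have hsum := hse.totalRelE_le hab hac hne (hG'ac.reachable.trans hG'cb.reachable)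
  set G' := swapEdge G a b c
  have hle : ∀ e ∈ (G.edgeFinset.erase s(a, b)).erase s(b, c), relE G' e a ≤ relE G e a := by
    intro e he
    obtain ⟨hbce, -, he⟩ : e ≠ s(b, c) ∧ e ≠ s(a, b) ∧ e ∈ G.edgeSet := by simpa using he
    have hace : s(a, c) ≠ e := by rintro rfl; exact hac he
    refine relE_le_relE fun w hw =>
      hw.mono_of_deleteEdges_le (deleteEdges_deleteEdges_le_swapEdge _) ?_
    exact (hG'ac.deleteEdges hace).reachable.trans
      (hG'cb.deleteEdges (by rw [Sym2.eq_swap]; exact hbce.symm)).reachable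
  have hac' : relE G' s(a, c) a = relE G s(a, b) a := by
    simp only [G', relE, swapEdge_deleteEdges hac]
  have hbcE : s(b, c) ∈ G.edgeFinset.erase s(a, b) :=
    mem_erase.2 ⟨by rw [Ne, Sym2.eq_iff]; grind [hab.ne], mem_edgeFinset.2 hbc⟩
  have habE : s(a, b) ∈ G.edgeFinset := mem_edgeFinset.2 hab
  rw [totalRelE, ← add_sum_erase _ _ habE, ← add_sum_erase _ _ hbcE,
    ← add_sum_erase _ _ hbcE, hac'] at hsum
  have := sum_le_sum hle
  omega

theorem isBridge_of_reachable_deleteEdges (hse : IsSwapEqEdgeUniform G)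
    (hb : G.IsBridge s(q, p)) (hu : (G.deleteEdges {s(q, p)}).Reachable q u) (huq : G.Adj u q) :
    G.IsBridge s(u, q) := by
  by_contra hnb
  rw [isBridge_iff, not_not] at hnb
  have hqp : G.Adj q p := hb.reachable_iff_adj.1 (hse.1.preconnected q p)
  have hup : ¬ (G.deleteEdges {s(q, p)}).Reachable u p := fun h => hb (hu.trans h)
  have hup' : u ≠ p := by rintro rfl; exact hup .rfl
  have hupqp : s(u, p) ≠ s(q, p) := by rw [Ne, Sym2.eq_iff]; grind [huq.ne]
  have hnadj : ¬ G.Adj u p := fun h => hup (h.deleteEdges hupqp).reachable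
  set G' := swapEdge G u q p
  have hK : (G'.deleteEdges {s(q, p)}).Reachable u q := by
    rcases hnb.deleteEdges_or (a := q) (b := p) with h | h | h
    · exact h.mono (deleteEdges_mono deleteEdges_le_swapEdge)
    · exact h.mono (deleteEdges_mono deleteEdges_le_swapEdge)
    · exact absurd (h.mono (deleteEdges_mono (deleteEdges_le _))) hup
  have hlt : relE G' s(q, p) u < relE G s(q, p) u :=
    relE_lt_relE (fun w hw => hw.mono_of_deleteEdges_le (deleteEdges_deleteEdges_le_swapEdge _) hK)
      ((swapEdge_adj_of_ne hup').deleteEdges hupqp).reachable hup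
  exact (hse.relE_le_relE_swapEdge huq hqp hnadj hup').not_gt hlt

theorem exists_leaf_reachable_deleteEdges (hse : IsSwapEqEdgeUniform G)
    (hb : G.IsBridge s(q, p)) :
    ∃ ℓ r, G.neighborSet ℓ = {r} ∧ (G.deleteEdges {s(q, p)}).Reachable q ℓ := by
  induction hk : {w | (G.deleteEdges {s(q, p)}).Reachable q w}.ncard
    using Nat.strong_induction_on generalizing q p with
  | _ k ih =>
  have hqp : G.Adj q p := hb.reachable_iff_adj.1 (hse.1.preconnected q p)
  by_cases hq : G.neighborSet q = {p}
  · exact ⟨q, p, hq, .rfl⟩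
  obtain ⟨u, hqu, hup⟩ : ∃ u, G.Adj q u ∧ u ≠ p := by
    simpa [Set.eq_singleton_iff_unique_mem, hqp] using hq
  have hu : (G.deleteEdges {s(q, p)}).Reachable q u :=
    (hqu.deleteEdges (by rw [Ne, Sym2.eq_iff]; grind)).reachable
  have hbu := hse.isBridge_of_reachable_deleteEdges hb hu hqu.symm
  have hside : {w | (G.deleteEdges {s(u, q)}).Reachable u w} ⊆
      {w | (G.deleteEdges {s(q, p)}).Reachable q w} := by
    intro w hw
    rcases Reachable.deleteEdges_or (a := q) (b := p) hw with h | h | h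
    · exact hu.trans (h.mono (deleteEdges_mono (deleteEdges_le _)))
    · exact absurd (h.mono (deleteEdges_le _)) hbu
    · exact absurd (hu.trans (h.mono (deleteEdges_mono (deleteEdges_le _)))) hb
  have hlt := Set.ncard_lt_ncard ((Set.ssubset_iff_of_subset hside).2 ⟨q, .rfl, hbu⟩)
  obtain ⟨ℓ, r, hℓ, hreach⟩ := ih _ (hk ▸ hlt) hbu rfl
  exact ⟨ℓ, r, hℓ, hside hreach⟩

theorem totalRelE_lt_of_neighborSet_eq {ℓ c : V} {e : Sym2 V} (hse : IsSwapEqEdgeUniform G)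
    (hℓ : G.neighborSet ℓ = {p}) (he : e ∈ G.edgeSet) (heℓ : e ≠ s(ℓ, p))
    (hsep : ¬ (G.deleteEdges {e}).Reachable p c) : totalRelE G p < totalRelE G c := by
  have hℓp := adj_of_neighborSet_eq hℓ
  have hℓp_e : (G.deleteEdges {e}).Reachable ℓ p := (hℓp.deleteEdges heℓ.symm).reachable
  have hcℓ : c ≠ ℓ := by rintro rfl; exact hsep hℓp_e.symm
  have hcp : c ≠ p := by rintro rfl; exact hsep .rfl
  have hcp' : (G.deleteEdges {s(ℓ, p)}).Reachable c p :=
    (hse.1.preconnected c p).deleteEdges_of_subsingleton_neighborSet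
      (hℓ ▸ Set.subsingleton_singleton) hcℓ hℓp.ne'
  have hsum := hse.totalRelE_le hℓp (fun h => hcp (eq_of_adj_of_neighborSet_eq hℓ h)) hcℓ.symm
    ((swapEdge_adj_of_ne hcℓ.symm).reachable.trans (hcp'.mono deleteEdges_le_swapEdge))
  have hself : relE (swapEdge G ℓ p c) s(ℓ, c) ℓ ≤ relE G s(ℓ, p) ℓ :=
    relE_le_relE fun w hw => eq_of_reachable_deleteEdges_of_neighborSet_eq hℓ hw ▸ .rfl
  have hmove : ∀ f ∈ G.edgeFinset.erase s(ℓ, p), ∀ w, (G.deleteEdges {f}).Reachable c w →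
      ((swapEdge G ℓ p c).deleteEdges {f}).Reachable ℓ w := fun f hf _ =>
    reachable_swapEdge_deleteEdges_of_neighborSet_eq hℓ hcℓ hcp
      (mem_edgeFinset.1 (mem_of_mem_erase hf))
  have heE : e ∈ G.edgeFinset.erase s(ℓ, p) := mem_erase.2 ⟨heℓ, mem_edgeFinset.2 he⟩
  have hlt : ∑ f ∈ G.edgeFinset.erase s(ℓ, p), relE (swapEdge G ℓ p c) f ℓ <
      ∑ f ∈ G.edgeFinset.erase s(ℓ, p), relE G f c :=
    sum_lt_sum (fun f hf => relE_le_relE (hmove f hf))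
      ⟨e, heE, relE_lt_relE (hmove e heE) .rfl fun h => hsep (h.trans hℓp_e).symm⟩
  have hp : ∀ f ∈ G.edgeFinset.erase s(ℓ, p), relE G f ℓ = relE G f p := fun f hf =>
    relE_eq_of_reachable (hℓp.deleteEdges (ne_of_mem_erase hf).symm).reachable
  have hℓpE : s(ℓ, p) ∈ G.edgeFinset := mem_edgeFinset.2 hℓp
  rw [totalRelE, ← add_sum_erase _ _ hℓpE, sum_congr rfl hp] at hsum
  rw [totalRelE, totalRelE, ← add_sum_erase _ _ hℓpE, ← add_sum_erase _ _ hℓpE,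
    relE_eq_of_reachable hcp'.symm]
  omega

theorem reachable_deleteEdges_of_neighborSet_eq {ℓ ℓ' p' : V} {e : Sym2 V}
    (hse : IsSwapEqEdgeUniform G) (hℓ : G.neighborSet ℓ = {p}) (hℓ' : G.neighborSet ℓ' = {p'})
    (he : e ∈ G.edgeSet) (heℓ : e ≠ s(ℓ, p)) (heℓ' : e ≠ s(ℓ', p')) :
    (G.deleteEdges {e}).Reachable p p' := by
  by_contra h
  exact (totalRelE_lt_of_neighborSet_eq hse hℓ he heℓ h).asymm
    (totalRelE_lt_of_neighborSet_eq hse hℓ' he heℓ' fun h' => h h'.symm)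

theorem neighborSet_eq_of_adj {ℓ : V} (hse : IsSwapEqEdgeUniform G) (hℓ : G.neighborSet ℓ = {p})
    (hu : G.Adj p u) : G.neighborSet u = {p} := by
  by_cases huℓ : u = ℓ
  · exact huℓ ▸ hℓ
  by_contra hne
  obtain ⟨z, huz, hzp⟩ : ∃ z, G.Adj u z ∧ z ≠ p := by
    simpa [Set.eq_singleton_iff_unique_mem, hu.symm] using hne
  have hℓp := adj_of_neighborSet_eq hℓ
  have hbℓ : G.IsBridge s(p, ℓ) := by
    rw [Sym2.eq_swap, isBridge_iff]
    exact fun h => hℓp.ne (eq_of_reachable_deleteEdges_of_neighborSet_eq hℓ h).symm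
  have hb : G.IsBridge s(u, p) := hse.isBridge_of_reachable_deleteEdges hbℓ
    (hu.deleteEdges (by rw [Ne, Sym2.eq_iff]; grind)).reachable hu.symm
  obtain ⟨ℓ', p', hℓ', hreach⟩ := hse.exists_leaf_reachable_deleteEdges hb
  have hℓ'u : ℓ' ≠ u := by
    rintro rfl
    exact hzp ((eq_of_adj_of_neighborSet_eq hℓ' huz).trans
      (eq_of_adj_of_neighborSet_eq hℓ' hu.symm).symm)
  have hℓ'p : ℓ' ≠ p := by rintro rfl; exact hb hreach
  have hne' : s(u, p) ≠ s(ℓ', p') := by rw [Ne, Sym2.eq_iff]; grind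
  have hp' : (G.deleteEdges {s(u, p)}).Reachable u p' :=
    hreach.trans ((adj_of_neighborSet_eq hℓ').deleteEdges hne'.symm).reachable
  exact hb (hp'.trans (hse.reachable_deleteEdges_of_neighborSet_eq hℓ' hℓ hu.symm hne'
    (by rw [Ne, Sym2.eq_iff]; grind)))

end IsSwapEqEdgeUniform

theorem stmt_18_general {V : Type*} [Fintype V] (G : SimpleGraph V) (n : ℕ)
    (hn : Fintype.card V = n) (hse : IsSwapEqEdgeUniform G) :
    ((∀ e ∈ G.edgeSet, ¬ G.IsBridge e) ∨
        ∃ b : V, (∀ v : V, v ≠ b → G.Adj b v) ∧ ∀ e ∈ G.edgeSet, b ∈ e) ∧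
      ∑ v : V, costE G v ≤ 2 * (n - 1) := by
  have hn1 : 1 ≤ n := hn ▸ Fintype.card_pos_iff.2 hse.1.nonempty
  have hm : (0 : ℝ) ≤ 2 * (n - 1) := by
    have : (1 : ℝ) ≤ n := by exact_mod_cast hn1
    linarith
  by_cases hbl : ∀ e ∈ G.edgeSet, ¬ G.IsBridge e
  · refine ⟨.inl hbl, sum_costE_le hm fun e he => ?_⟩
    simp [relE_eq_zero_of_not_isBridge hse.1 (hbl e (mem_edgeFinset.1 he)), hm]
  push Not at hbl
  obtain ⟨⟨q, r⟩, -, hb⟩ := hbl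
  obtain ⟨ℓ, p, hℓ, -⟩ := hse.exists_leaf_reachable_deleteEdges hb
  have hstar : ∀ u, G.Adj p u → G.neighborSet u = {p} := fun u => hse.neighborSet_eq_of_adj hℓ
  refine ⟨.inr ⟨p, fun v => hse.1.adj_of_forall_neighborSet_eq hstar,
    fun e => hse.1.mem_of_forall_neighborSet_eq hstar⟩, sum_costE_le hm fun e he => ?_⟩
  rw [mem_edgeFinset] at he
  obtain ⟨u, rfl⟩ := Sym2.mem_iff_exists.1 (hse.1.mem_of_forall_neighborSet_eq hstar he)
  rw [Sym2.eq_swap, ← Nat.cast_sum, sum_relE_of_neighborSet_eq hse.1 (hstar u he), hn]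
  push_cast [hn1]
  rfl

/-- A swap equilibrium `G` for the uniform edge destroyer is bridgeless or a
star, and its social cost is at most `2(n−1)`. -/
theorem stmt_18 {V : Type*} [Fintype V] (G : SimpleGraph V) (n : ℕ)
    (hn : Fintype.card V = n) (hn3 : 3 ≤ n) (hse : IsSwapEqEdgeUniform G) :
    ((∀ e ∈ G.edgeSet, ¬ G.IsBridge e) ∨
        ∃ b : V, (∀ v : V, v ≠ b → G.Adj b v) ∧ ∀ e ∈ G.edgeSet, b ∈ e) ∧
      ∑ v : V, costE G v ≤ 2 * (n - 1) :=
  stmt_18_general G n hn hse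
end
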